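/- arXiv:1902.00693 — 6 statements merged into one kernel-verified Lean document; each statement's English description precedes it below -/
import Mathlib

section
/- Let Φ : X×Y → ℝ^m be a generating function, a, b ∈ ℝ^m with a ≤ b componentwise, and assume the uncertainty set U_Φ^{a,b} is nonempty. Let (α*, β*, γ*) be an optimal solution of problem (7), and let h* be a classification rule satisfying h*(x,y) ≥ Φ(x,y)ᵀ(α* − β*) + γ* for all (x,y) ∈ X×Y. Then h* is a minimax classification rule against U_Φ^{a,b}: for every classification rule h, sup_{p ∈ U_Φ^{a,b}} ℓ(h*, p) ≤ sup_{p ∈ U_Φ^{a,b}} ℓ(h, p). -/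
/-!
Let `v = aᵀα - bᵀβ + γ` be the optimal value of (7). Since `α, β ≥ 0` and `a ≤ Φᵀp ≤ b` on
`U`, weak duality gives `⟨p, h*⟩ ≥ v`, i.e. `ℓ(h*, p) ≤ 1 - v`, for every `p ∈ U`.
Conversely every rule `h` has some `p ∈ U` with `⟨p, h⟩ ≤ v`: otherwise the compact convex set
`{(Φᵀp, ⟨p, h⟩) : p ∈ Δ}` misses `[a, b] × (-∞, v]`, and a separating hyperplane, which cannot
be vertical because `U ≠ ∅`, yields `w, c` with `Φ(z)ᵀw + c < h(z)` on `X × Y` and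
`qᵀw + c > v` on `[a, b]`. Then `(w⁺, w⁻, c)` is feasible for (7) with value
`min_{q ∈ [a, b]} qᵀw + c > v`, contradicting optimality.
-/

open Finset

/-- A probability distribution on `X × Y`. -/
def IsProb {X Y : Type*} [Fintype X] [Fintype Y] (p : X × Y → ℝ) : Prop :=
  (∀ z, 0 ≤ p z) ∧ ∑ z : X × Y, p z = 1

/-- A (probabilistic) classification rule on `X × Y`. -/
def IsRule {X Y : Type*} [Fintype X] [Fintype Y] (h : X × Y → ℝ) : Prop :=
  (∀ z, 0 ≤ h z) ∧ ∀ x : X, ∑ y : Y, h (x, y) = 1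

/-- Expected 0-1 loss `ℓ(h, p) = 1 - ∑ p·h`. -/
def loss {X Y : Type*} [Fintype X] [Fintype Y] (h p : X × Y → ℝ) : ℝ :=
  1 - ∑ z : X × Y, p z * h z

/-- Membership in the polyhedral uncertainty set `U_Φ^{a,b}`. -/
def InU {X Y : Type*} [Fintype X] [Fintype Y] {m : ℕ}
    (Φ : X × Y → Fin m → ℝ) (a b : Fin m → ℝ) (p : X × Y → ℝ) : Prop :=
  IsProb p ∧ ∀ i, a i ≤ (∑ z : X × Y, p z * Φ z i) ∧ (∑ z : X × Y, p z * Φ z i) ≤ b i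

/-- Feasibility for problem (7). -/
def Feas7 {X Y : Type*} [Fintype X] [Fintype Y] [Nonempty X] [Nonempty Y] {m : ℕ}
    (Φ : X × Y → Fin m → ℝ) (α β : Fin m → ℝ) (γ : ℝ) : Prop :=
  (∀ i, 0 ≤ α i) ∧ (∀ i, 0 ≤ β i) ∧
    (Finset.univ.sup' Finset.univ_nonempty fun x : X =>
      ∑ y : Y, max (∑ i, Φ (x, y) i * (α i - β i) + γ) 0) ≤ 1

/-- Optimality for problem (7) with data `a, b`. -/
def Opt7 {X Y : Type*} [Fintype X] [Fintype Y] [Nonempty X] [Nonempty Y] {m : ℕ}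
    (Φ : X × Y → Fin m → ℝ) (a b : Fin m → ℝ) (α β : Fin m → ℝ) (γ : ℝ) : Prop :=
  Feas7 Φ α β γ ∧ ∀ α' β' : Fin m → ℝ, ∀ γ' : ℝ, Feas7 Φ α' β' γ' →
    (∑ i, a i * α' i) - (∑ i, b i * β' i) + γ' ≤ (∑ i, a i * α i) - (∑ i, b i * β i) + γ

theorem LinearMap.apply_prod_eq_sum {ι : Type*} [Fintype ι] [DecidableEq ι]
    (f : (ι → ℝ) × ℝ →ₗ[ℝ] ℝ) (q : ι → ℝ) (r : ℝ) :
    f (q, r) = ∑ i, q i * f (Pi.single i 1, 0) + r * f (0, 1) := by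
  have hqr : (q, r) = ∑ i, q i • ((Pi.single i 1 : ι → ℝ), (0 : ℝ)) + r • ((0 : ι → ℝ), (1 : ℝ)) := by
    ext <;> simp [Prod.fst_sum, Prod.snd_sum, Pi.single_apply]
  rw [hqr, map_add, map_sum]
  simp only [map_smul, smul_eq_mul]

theorem exists_affine_lt_of_disjoint_prod_Iic {ι : Type*} [Fintype ι]
    {K : Set ((ι → ℝ) × ℝ)} {B : Set (ι → ℝ)} {v : ℝ}
    (hKconv : Convex ℝ K) (hKcomp : IsCompact K) (hBconv : Convex ℝ B) (hBclosed : IsClosed B)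
    (hdisj : Disjoint K (B ×ˢ Set.Iic v)) (hKB : ∃ x ∈ K, x.1 ∈ B) :
    ∃ (w : ι → ℝ) (c : ℝ), (∀ x ∈ K, ∑ i, x.1 i * w i + c < x.2) ∧
      ∀ q ∈ B, v < ∑ i, q i * w i + c := by
  classical
  obtain ⟨f, u, u', hfK, huu', hfD⟩ := geometric_hahn_banach_compact_closed hKconv hKcomp
    (hBconv.prod (convex_Iic v)) (hBclosed.prod isClosed_Iic) hdisj
  set t := f (0, 1)
  have hf (q : ι → ℝ) (r : ℝ) : f (q, r) = ∑ i, q i * f (Pi.single i 1, 0) + r * t :=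
    (f : (ι → ℝ) × ℝ →ₗ[ℝ] ℝ).apply_prod_eq_sum q r
  -- the separating hyperplane is not vertical: `K` has a point above `B × Iic v`
  have ht : t < 0 := by
    obtain ⟨⟨q₀, s₀⟩, hK, hB⟩ := hKB
    have hlt := hfK _ hK
    have hgt := hfD (q₀, min v (s₀ - 1)) ⟨hB, min_le_left v (s₀ - 1)⟩
    rw [hf] at hlt hgt
    refine neg_of_mul_neg_right (a := s₀ - min v (s₀ - 1)) (by linarith) ?_
    linarith [min_le_right v (s₀ - 1)]
  have hτ : 0 < -t := neg_pos.2 ht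
  have hsum (q : ι → ℝ) : ∑ i, q i * (f (Pi.single i 1, 0) / -t) =
      (∑ i, q i * f (Pi.single i 1, 0)) / -t := by
    simp only [sum_div, mul_div_assoc]
  refine ⟨fun i => f (Pi.single i 1, 0) / -t, -u / -t, ?_, fun q hq => ?_⟩
  · rintro ⟨q, s⟩ hx
    have := hfK _ hx
    rw [hf] at this
    rw [hsum, ← add_div, div_lt_iff₀ hτ]
    linarith
  · have := hfD (q, v) ⟨hq, le_refl v⟩
    rw [hf] at this
    rw [hsum, ← add_div, lt_div_iff₀ hτ]
    linarith

section Minimax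

open Matrix

variable {X Y : Type*} [Fintype X] [Fintype Y] {m : ℕ} {Φ : X × Y → Fin m → ℝ} {a b : Fin m → ℝ}

theorem inU_iff_mem_stdSimplex {p : X × Y → ℝ} :
    InU Φ a b p ↔ p ∈ stdSimplex ℝ (X × Y) ∧ p ᵥ* Φ ∈ Set.Icc a b :=
  and_congr Iff.rfl ⟨fun h => ⟨fun i => (h i).1, fun i => (h i).2⟩, fun h i => ⟨h.1 i, h.2 i⟩⟩

theorem le_of_exists_inU (hU : ∃ p, InU Φ a b p) : a ≤ b := by
  obtain ⟨p, hp⟩ := hU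
  exact fun i => (hp.2 i).1.trans (hp.2 i).2

theorem objective7_le_sum_mul_of_inU {p g : X × Y → ℝ} {α β : Fin m → ℝ} {γ : ℝ}
    (hα : ∀ i, 0 ≤ α i) (hβ : ∀ i, 0 ≤ β i) (hp : InU Φ a b p)
    (hg : ∀ z, ∑ i, Φ z i * (α i - β i) + γ ≤ g z) :
    ∑ i, a i * α i - ∑ i, b i * β i + γ ≤ ∑ z, p z * g z :=
  calc ∑ i, a i * α i - ∑ i, b i * β i + γ
      ≤ ∑ i, (∑ z, p z * Φ z i) * (α i - β i) + γ := by
        rw [← sum_sub_distrib]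
        gcongr with i
        nlinarith [mul_le_mul_of_nonneg_right (hp.2 i).1 (hα i),
          mul_le_mul_of_nonneg_right (hp.2 i).2 (hβ i)]
    _ = ∑ z, p z * ∑ i, Φ z i * (α i - β i) + γ := by
        simp only [sum_mul, mul_sum, mul_assoc]
        rw [sum_comm]
    _ = ∑ z, p z * (∑ i, Φ z i * (α i - β i) + γ) := by
        simp only [mul_add, sum_add_distrib, ← sum_mul, hp.1.2, one_mul]
    _ ≤ ∑ z, p z * g z := sum_le_sum fun z _ => mul_le_mul_of_nonneg_left (hg z) (hp.1.1 z)

theorem feas7_of_le_isRule [Nonempty X] [Nonempty Y] {h : X × Y → ℝ} {α β : Fin m → ℝ} {γ : ℝ}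
    (hα : ∀ i, 0 ≤ α i) (hβ : ∀ i, 0 ≤ β i) (hh : IsRule h)
    (hle : ∀ z, ∑ i, Φ z i * (α i - β i) + γ ≤ h z) : Feas7 Φ α β γ :=
  ⟨hα, hβ, sup'_le _ _ fun x _ =>
    (sum_le_sum fun y _ => max_le (hle (x, y)) (hh.1 (x, y))).trans (hh.2 x).le⟩

theorem exists_mem_Icc_mul_eq {a b : ℝ} (hab : a ≤ b) (w : ℝ) :
    ∃ q ∈ Set.Icc a b, q * w = a * max w 0 - b * max (-w) 0 := by
  rcases le_total 0 w with hw | hw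
  · exact ⟨a, ⟨le_rfl, hab⟩, by simp [hw]⟩
  · exact ⟨b, ⟨hab, le_rfl⟩, by simp [hw]⟩

theorem exists_affine_lt_of_forall_inU_lt {h : X × Y → ℝ} {v : ℝ} (hU : ∃ p, InU Φ a b p)
    (hlt : ∀ p, InU Φ a b p → v < ∑ z, p z * h z) :
    ∃ (w : Fin m → ℝ) (c : ℝ), (∀ z, ∑ i, Φ z i * w i + c < h z) ∧
      ∀ q ∈ Set.Icc a b, v < ∑ i, q i * w i + c := by
  classical
  let T : (X × Y → ℝ) →ₗ[ℝ] (Fin m → ℝ) × ℝ :=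
    (vecMulLinear Φ).prod ((dotProductBilin ℝ ℝ).flip h)
  have hdisj : Disjoint (T '' stdSimplex ℝ (X × Y)) (Set.Icc a b ×ˢ Set.Iic v) := by
    refine Set.disjoint_left.2 ?_
    rintro _ ⟨p, hp, rfl⟩ ⟨hpΦ, hph⟩
    exact (hlt p (inU_iff_mem_stdSimplex.2 ⟨hp, hpΦ⟩)).not_ge hph
  have hKB : ∃ x ∈ T '' stdSimplex ℝ (X × Y), x.1 ∈ Set.Icc a b := by
    obtain ⟨p, hp⟩ := hU
    exact ⟨T p, ⟨p, (inU_iff_mem_stdSimplex.1 hp).1, rfl⟩, (inU_iff_mem_stdSimplex.1 hp).2⟩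
  obtain ⟨w, c, hK, hB⟩ := exists_affine_lt_of_disjoint_prod_Iic
    ((convex_stdSimplex ℝ _).linear_image T) ((isCompact_stdSimplex ℝ _).image
      T.continuous_of_finiteDimensional) (convex_Icc a b) isClosed_Icc hdisj hKB
  refine ⟨w, c, fun z => ?_, hB⟩
  have hTz : T (Pi.single z 1) = (Φ z, h z) :=
    Prod.ext (single_one_vecMul z Φ) (by simp [T, dotProductBilin])
  simpa [hTz] using hK _ ⟨Pi.single z 1, single_mem_stdSimplex ℝ z, rfl⟩

theorem exists_inU_sum_mul_le_objective7 [Nonempty X] [Nonempty Y] {α β : Fin m → ℝ} {γ : ℝ}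
    {h : X × Y → ℝ} (hU : ∃ p, InU Φ a b p) (hopt : Opt7 Φ a b α β γ) (hh : IsRule h) :
    ∃ p, InU Φ a b p ∧ ∑ z, p z * h z ≤ ∑ i, a i * α i - ∑ i, b i * β i + γ := by
  by_contra! hlt
  obtain ⟨w, c, hwh, hwB⟩ := exists_affine_lt_of_forall_inU_lt hU hlt
  have hfeas : Feas7 Φ (fun i => max (w i) 0) (fun i => max (-w i) 0) c :=
    feas7_of_le_isRule (fun i => le_max_right _ _) (fun i => le_max_right _ _) hh fun z => by
      simpa only [max_zero_sub_max_neg_zero_eq_self] using (hwh z).le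
  choose q hq hqw using fun i => exists_mem_Icc_mul_eq (le_of_exists_inU hU i) (w i)
  have hobj : ∑ i, q i * w i = ∑ i, a i * max (w i) 0 - ∑ i, b i * max (-w i) 0 := by
    rw [← sum_sub_distrib]
    exact sum_congr rfl fun i _ => hqw i
  have hqv := hwB q ⟨fun i => (hq i).1, fun i => (hq i).2⟩
  linarith [hopt.2 _ _ _ hfeas]

theorem loss_le_one {h p : X × Y → ℝ} (hh : ∀ z, 0 ≤ h z) (hp : IsProb p) : loss h p ≤ 1 :=
  sub_le_self _ (sum_nonneg fun z _ => mul_nonneg (hp.1 z) (hh z))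

end Minimax

theorem lpc_minimax_rule_general {X Y : Type*} [Fintype X] [Fintype Y] [Nonempty X] [Nonempty Y]
    {m : ℕ} (Φ : X × Y → Fin m → ℝ) (a b : Fin m → ℝ)
    (hU : ∃ p, InU Φ a b p)
    (α β : Fin m → ℝ) (γ : ℝ) (hopt : Opt7 Φ a b α β γ)
    (hstar : X × Y → ℝ)
    (hge : ∀ z : X × Y, ∑ i, Φ z i * (α i - β i) + γ ≤ hstar z) :
    ∀ h : X × Y → ℝ, IsRule h →
      sSup {r | ∃ p, InU Φ a b p ∧ r = loss hstar p} ≤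
        sSup {r | ∃ p, InU Φ a b p ∧ r = loss h p} := by
  intro h hh
  obtain ⟨p₀, hp₀, hp₀h⟩ := exists_inU_sum_mul_le_objective7 hU hopt hh
  have hbdd : BddAbove {r | ∃ p, InU Φ a b p ∧ r = loss h p} :=
    ⟨1, by rintro _ ⟨p, hp, rfl⟩; exact loss_le_one hh.1 hp.1⟩
  obtain ⟨p₁, hp₁⟩ := hU
  refine csSup_le ⟨_, p₁, hp₁, rfl⟩ ?_
  rintro _ ⟨p, hp, rfl⟩
  have hstar_p := objective7_le_sum_mul_of_inU hopt.1.1 hopt.1.2.1 hp hge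
  calc loss hstar p ≤ loss h p₀ := by unfold loss; linarith
    _ ≤ _ := le_csSup hbdd ⟨p₀, hp₀, rfl⟩

/-- a rule dominating `Φᵀ(α*-β*) + γ*` for an optimal solution of (7)
is minimax against `U_Φ^{a,b}`. -/
theorem lpc_minimax_rule {X Y : Type*} [Fintype X] [Fintype Y] [Nonempty X] [Nonempty Y]
    {m : ℕ} (Φ : X × Y → Fin m → ℝ) (a b : Fin m → ℝ) (hab : ∀ i, a i ≤ b i)
    (hU : ∃ p, InU Φ a b p)
    (α β : Fin m → ℝ) (γ : ℝ) (hopt : Opt7 Φ a b α β γ)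
    (hstar : X × Y → ℝ) (hrule : IsRule hstar)
    (hge : ∀ z : X × Y, ∑ i, Φ z i * (α i - β i) + γ ≤ hstar z) :
    ∀ h : X × Y → ℝ, IsRule h →
      sSup {r | ∃ p, InU Φ a b p ∧ r = loss hstar p} ≤
        sSup {r | ∃ p, InU Φ a b p ∧ r = loss h p} :=
  lpc_minimax_rule_general Φ a b hU α β γ hopt hstar hge
end

section
/- Let Φ : X×Y → ℝ^m be a generating function and a, b ∈ ℝ^m with a ≤ b componentwise. Then for every probability distribution p ∈ U_Φ^{a,b} and every classification rule h: 0 ≤ 1 + κ_Φ^{a,b}(−h) ≤ ℓ(h,p) ≤ 1 − κ_Φ^{a,b}(h) ≤ 1. -/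
open Finset

/-- The dual value `κ_Φ^{a,b}(q)` of Proposition 1: supremum of `aᵀα - bᵀβ + γ` over
`α, β ≥ 0` with `Φᵀ(α-β) + γ ≤ q` pointwise. -/
noncomputable def kappa {X Y : Type*} [Fintype X] [Fintype Y] {m : ℕ}
    (Φ : X × Y → Fin m → ℝ) (a b : Fin m → ℝ) (q : X × Y → ℝ) : ℝ :=
  sSup {r | ∃ α β : Fin m → ℝ, ∃ γ : ℝ, (∀ i, 0 ≤ α i) ∧ (∀ i, 0 ≤ β i) ∧
    (∀ z : X × Y, ∑ i, Φ z i * (α i - β i) + γ ≤ q z) ∧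
    r = (∑ i, a i * α i) - (∑ i, b i * β i) + γ}

/-
Weak LP duality: every dual-feasible `(α, β, γ)` has objective value at most `E_p[q]` for each
`p ∈ U_Φ^{a,b}`, because `a ≤ E_p[Φ] ≤ b` and `α, β ≥ 0`; hence `κ(q) ≤ E_p[q]`. The constant
dual points `(0, 0, γ)` with `γ ≤ q` are feasible, so `κ(h) ≥ 0` and `κ(-h) ≥ -1` because
`0 ≤ h ≤ 1` for a rule. Since `ℓ(h, p) = 1 - E_p[h]`, the four inequalities follow.
-/

section WeakDuality

variable {X Y : Type*} {m : ℕ} (Φ : X × Y → Fin m → ℝ) (a b : Fin m → ℝ)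

def dualValues (q : X × Y → ℝ) : Set ℝ :=
  {r | ∃ α β : Fin m → ℝ, ∃ γ : ℝ, (∀ i, 0 ≤ α i) ∧ (∀ i, 0 ≤ β i) ∧
    (∀ z : X × Y, ∑ i, Φ z i * (α i - β i) + γ ≤ q z) ∧
    r = (∑ i, a i * α i) - (∑ i, b i * β i) + γ}

theorem const_mem_dualValues {q : X × Y → ℝ} {γ : ℝ} (hγ : ∀ z, γ ≤ q z) :
    γ ∈ dualValues Φ a b q :=
  ⟨0, 0, γ, fun _ => le_rfl, fun _ => le_rfl, fun z => by simpa using hγ z, by simp⟩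

variable [Fintype X] [Fintype Y] {Φ a b}

theorem le_expectation_of_mem_dualValues {p q : X × Y → ℝ} (hp : InU Φ a b p) {r : ℝ}
    (hr : r ∈ dualValues Φ a b q) : r ≤ ∑ z, p z * q z := by
  obtain ⟨⟨hp0, hp1⟩, hmom⟩ := hp
  obtain ⟨α, β, γ, hα, hβ, hfeas, rfl⟩ := hr
  have hmean : ∑ z, p z * (∑ i, Φ z i * (α i - β i) + γ)
      = ∑ i, (α i - β i) * ∑ z, p z * Φ z i + γ := by
    simp only [mul_add, sum_add_distrib, ← sum_mul, hp1, one_mul, mul_sum]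
    rw [sum_comm]
    congr 1
    exact sum_congr rfl fun i _ => sum_congr rfl fun z _ => by ring
  calc ∑ i, a i * α i - ∑ i, b i * β i + γ
      ≤ ∑ i, (α i - β i) * ∑ z, p z * Φ z i + γ := by
        rw [← sum_sub_distrib]
        gcongr with i
        nlinarith [hmom i, hα i, hβ i]
    _ = ∑ z, p z * (∑ i, Φ z i * (α i - β i) + γ) := hmean.symm
    _ ≤ ∑ z, p z * q z := by
        gcongr with z
        exacts [hp0 z, hfeas z]

theorem kappa_le_expectation {p : X × Y → ℝ} (hp : InU Φ a b p) (q : X × Y → ℝ) :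
    kappa Φ a b q ≤ ∑ z, p z * q z := by
  obtain ⟨γ, hγ⟩ := (Set.finite_range q).bddBelow
  exact csSup_le ⟨γ, const_mem_dualValues Φ a b fun z => hγ ⟨z, rfl⟩⟩
    fun _ => le_expectation_of_mem_dualValues hp

theorem le_kappa_of_forall_le {p q : X × Y → ℝ} (hp : InU Φ a b p) {γ : ℝ}
    (hγ : ∀ z, γ ≤ q z) : γ ≤ kappa Φ a b q :=
  le_csSup ⟨_, fun _ => le_expectation_of_mem_dualValues hp⟩ (const_mem_dualValues Φ a b hγ)

end WeakDuality

theorem IsRule.le_one {X Y : Type*} [Fintype X] [Fintype Y] {h : X × Y → ℝ} (hh : IsRule h)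
    (z : X × Y) : h z ≤ 1 :=
  hh.2 z.1 ▸ single_le_sum (fun y _ => hh.1 (z.1, y)) (mem_univ z.2)

theorem lpc_loss_bounds_general {X Y : Type*} [Fintype X] [Fintype Y]
    {m : ℕ} (Φ : X × Y → Fin m → ℝ) (a b : Fin m → ℝ)
    (p : X × Y → ℝ) (hp : InU Φ a b p) (h : X × Y → ℝ) (hh : IsRule h) :
    0 ≤ 1 + kappa Φ a b (fun z => -h z) ∧
      1 + kappa Φ a b (fun z => -h z) ≤ loss h p ∧
      loss h p ≤ 1 - kappa Φ a b h ∧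
      1 - kappa Φ a b h ≤ 1 := by
  have hκ_nonneg : 0 ≤ kappa Φ a b h := le_kappa_of_forall_le hp hh.1
  have hκneg_ge : -1 ≤ kappa Φ a b (fun z => -h z) :=
    le_kappa_of_forall_le hp fun z => neg_le_neg (hh.le_one z)
  have hκ_le := kappa_le_expectation hp h
  have hκneg_le := kappa_le_expectation hp fun z => -h z
  simp only [mul_neg, sum_neg_distrib] at hκneg_le
  unfold loss
  exact ⟨by linarith, by linarith, by linarith, by linarith⟩

/-- performance bounds
`0 ≤ 1 + κ(−h) ≤ ℓ(h,p) ≤ 1 − κ(h) ≤ 1` for all `p ∈ U_Φ^{a,b}` and all rules `h`. -/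
theorem lpc_loss_bounds {X Y : Type*} [Fintype X] [Fintype Y] [Nonempty X] [Nonempty Y]
    {m : ℕ} (Φ : X × Y → Fin m → ℝ) (a b : Fin m → ℝ) (hab : ∀ i, a i ≤ b i)
    (p : X × Y → ℝ) (hp : InU Φ a b p) (h : X × Y → ℝ) (hh : IsRule h) :
    0 ≤ 1 + kappa Φ a b (fun z => -h z) ∧
      1 + kappa Φ a b (fun z => -h z) ≤ loss h p ∧
      loss h p ≤ 1 - kappa Φ a b h ∧
      1 - kappa Φ a b h ≤ 1 :=
  lpc_loss_bounds_general Φ a b p hp h hh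
end

section
/- Let Φ : X×Y → ℝ^m, λ ∈ ℝ^m, and γ ∈ ℝ satisfy max_{x∈X} Σ_{y∈Y} max(Φ(x,y)ᵀλ + γ, 0) ≤ 1. Define h(x,y) = max(Φ(x,y)ᵀλ + γ, 0) + (1 − Σ_{y'∈Y} max(Φ(x,y')ᵀλ + γ, 0))/|Y|. Then h is a classification rule (h(x,y) ≥ 0 for all (x,y) and Σ_{y∈Y} h(x,y) = 1 for every x ∈ X) and it satisfies h(x,y) ≥ Φ(x,y)ᵀλ + γ for all (x,y) ∈ X×Y. -/
open Finset

/-!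
Fix `x`. The scores `f y = max (Φ(x,y)ᵀλ + γ) 0` are nonnegative with total mass at most `1`,
so adding the missing mass `1 - ∑ f` evenly to each of the `|Y|` labels keeps every entry
nonnegative and at least `f y ≥ Φ(x,y)ᵀλ + γ`, and makes the total exactly `1`.
-/

section SpreadDeficit

variable {Y : Type*} [Fintype Y]

noncomputable def spreadDeficit (f : Y → ℝ) (y : Y) : ℝ :=
  f y + (1 - ∑ y', f y') / Fintype.card Y

theorem sum_spreadDeficit [Nonempty Y] (f : Y → ℝ) : ∑ y, spreadDeficit f y = 1 := by
  have hcard : (Fintype.card Y : ℝ) ≠ 0 := Nat.cast_ne_zero.mpr Fintype.card_ne_zero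
  simp only [spreadDeficit, sum_add_distrib, sum_const, card_univ, nsmul_eq_mul]
  field_simp
  ring

theorem le_spreadDeficit {f : Y → ℝ} (hf : ∑ y, f y ≤ 1) (y : Y) : f y ≤ spreadDeficit f y :=
  le_add_of_nonneg_right (div_nonneg (sub_nonneg.mpr hf) (Nat.cast_nonneg _))

theorem spreadDeficit_nonneg {f : Y → ℝ} (hf₀ : ∀ y, 0 ≤ f y) (hf : ∑ y, f y ≤ 1) (y : Y) :
    0 ≤ spreadDeficit f y :=
  (hf₀ y).trans (le_spreadDeficit hf y)

end SpreadDeficit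

/-- the explicit construction (9) yields a classification rule
dominating `Φ(x,y)ᵀλ + γ`. -/
theorem lpc_rule_construction {X Y : Type*} [Fintype X] [Fintype Y]
    [Nonempty X] [Nonempty Y] {m : ℕ}
    (Φ : X × Y → Fin m → ℝ) (l : Fin m → ℝ) (γ : ℝ)
    (hfeas : (Finset.univ.sup' Finset.univ_nonempty fun x : X =>
        ∑ y : Y, max (∑ i, Φ (x, y) i * l i + γ) 0) ≤ 1)
    (h : X × Y → ℝ)
    (hdef : h = fun z => max (∑ i, Φ z i * l i + γ) 0 +
      (1 - ∑ y' : Y, max (∑ i, Φ (z.1, y') i * l i + γ) 0) / (Fintype.card Y)) :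
    IsRule h ∧ ∀ z : X × Y, ∑ i, Φ z i * l i + γ ≤ h z := by
  set score : X × Y → ℝ := fun z => ∑ i, Φ z i * l i + γ
  have hrow (x : X) : ∑ y, max (score (x, y)) 0 ≤ 1 :=
    (le_sup' (fun x => ∑ y, max (score (x, y)) 0) (mem_univ x)).trans hfeas
  have hh (z : X × Y) : h z = spreadDeficit (fun y => max (score (z.1, y)) 0) z.2 := by
    rw [hdef]; rfl
  refine ⟨⟨fun z => ?_, fun x => ?_⟩, fun z => ?_⟩
  · rw [hh]
    exact spreadDeficit_nonneg (fun _ => le_max_right _ _) (hrow z.1) z.2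
  · simp only [hh]
    exact sum_spreadDeficit _
  · rw [hh]
    exact (le_max_left _ _).trans (le_spreadDeficit (hrow z.1) z.2)
end

section
/- Let Φ : X×Y → ℝ^m be a generating function, τ ∈ ℝ^m, d ∈ ℝ^m with d ≥ 0 componentwise, and p* a probability distribution with p* ∈ U_Φ^{τ−d, τ+d}. Let λ ∈ ℝ^m, γ ∈ ℝ, and let h be a classification rule satisfying h(x,y) ≥ Φ(x,y)ᵀλ + γ for all (x,y) ∈ X×Y. Then ℓ(h, p*) ≤ 1 − τᵀλ − γ + Σ_{i=1}^m d_i·|λ_i|. -/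
/-!
Under `p*` each feature mean `E[Φᵢ]` lies within `dᵢ` of `τᵢ`, so `E[Φᵢ] λᵢ ≥ τᵢ λᵢ - dᵢ |λᵢ|`.
Since `p*` is a probability and `h ≥ Φᵀλ + γ` pointwise, `E[h] ≥ τᵀλ + γ - ∑ dᵢ |λᵢ|`, and the loss
is `1 - E[h]`.
-/

open Finset

lemma sub_mul_abs_le_mul_of_mem_Icc {τ d s : ℝ} (hs : s ∈ Set.Icc (τ - d) (τ + d)) (l : ℝ) :
    τ * l - d * |l| ≤ s * l := by
  have hdist : |s - τ| ≤ d := abs_sub_le_iff.2 ⟨by linarith [hs.2], by linarith [hs.1]⟩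
  have hprod : |s - τ| * |l| ≤ d * |l| := mul_le_mul_of_nonneg_right hdist (abs_nonneg l)
  have hlow : -|(s - τ) * l| ≤ (s - τ) * l := neg_abs_le _
  rw [abs_mul] at hlow
  linarith

lemma sum_mul_affine_of_sum_eq_one {α ι : Type*} [Fintype α] [Fintype ι] {p : α → ℝ}
    (hp : ∑ z, p z = 1) (Φ : α → ι → ℝ) (l : ι → ℝ) (γ : ℝ) :
    ∑ z, p z * (∑ i, Φ z i * l i + γ) = ∑ i, (∑ z, p z * Φ z i) * l i + γ := by
  have hlin : ∑ z, p z * ∑ i, Φ z i * l i = ∑ i, (∑ z, p z * Φ z i) * l i := by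
    simp only [mul_sum, sum_mul, mul_assoc]
    exact sum_comm
  rw [← hlin]
  simp only [mul_add, sum_add_distrib, ← sum_mul, hp, one_mul]

lemma InU.sub_sum_mul_abs_le_sum_mul {X Y : Type*} [Fintype X] [Fintype Y] {m : ℕ}
    {Φ : X × Y → Fin m → ℝ} {τ d : Fin m → ℝ} {p : X × Y → ℝ}
    (hp : InU Φ (fun i => τ i - d i) (fun i => τ i + d i) p)
    (l : Fin m → ℝ) (γ : ℝ) {h : X × Y → ℝ} (hge : ∀ z, ∑ i, Φ z i * l i + γ ≤ h z) :
    ∑ i, τ i * l i + γ - ∑ i, d i * |l i| ≤ ∑ z, p z * h z := by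
  obtain ⟨⟨hp0, hp1⟩, hmoment⟩ := hp
  calc ∑ i, τ i * l i + γ - ∑ i, d i * |l i|
      = ∑ i, (τ i * l i - d i * |l i|) + γ := by rw [sum_sub_distrib]; ring
    _ ≤ ∑ i, (∑ z, p z * Φ z i) * l i + γ := by
        gcongr with i
        exact sub_mul_abs_le_mul_of_mem_Icc (hmoment i) (l i)
    _ = ∑ z, p z * (∑ i, Φ z i * l i + γ) := (sum_mul_affine_of_sum_eq_one hp1 Φ l γ).symm
    _ ≤ ∑ z, p z * h z := sum_le_sum fun z _ => mul_le_mul_of_nonneg_left (hge z) (hp0 z)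

theorem lpc_risk_upper_bound_general {X Y : Type*} [Fintype X] [Fintype Y] {m : ℕ}
    (Φ : X × Y → Fin m → ℝ) (τ d : Fin m → ℝ)
    (pstar : X × Y → ℝ) (hstar : InU Φ (fun i => τ i - d i) (fun i => τ i + d i) pstar)
    (l : Fin m → ℝ) (γ : ℝ) (h : X × Y → ℝ)
    (hge : ∀ z : X × Y, ∑ i, Φ z i * l i + γ ≤ h z) :
    loss h pstar ≤ 1 - (∑ i, τ i * l i) - γ + ∑ i, d i * |l i| := by
  have hscore := hstar.sub_sum_mul_abs_le_sum_mul l γ hge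
  unfold loss
  linarith

/-- upper bound on the risk of a rule dominating `Φᵀλ + γ` when the true
distribution lies in `U_Φ^{τ−d, τ+d}`. -/
theorem lpc_risk_upper_bound {X Y : Type*} [Fintype X] [Fintype Y]
    [Nonempty X] [Nonempty Y] {m : ℕ}
    (Φ : X × Y → Fin m → ℝ) (τ d : Fin m → ℝ) (hd : ∀ i, 0 ≤ d i)
    (pstar : X × Y → ℝ) (hstar : InU Φ (fun i => τ i - d i) (fun i => τ i + d i) pstar)
    (l : Fin m → ℝ) (γ : ℝ) (h : X × Y → ℝ) (hrule : IsRule h)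
    (hge : ∀ z : X × Y, ∑ i, Φ z i * l i + γ ≤ h z) :
    loss h pstar ≤ 1 - (∑ i, τ i * l i) - γ + ∑ i, d i * |l i| :=
  lpc_risk_upper_bound_general Φ τ d pstar hstar l γ h hge
end

section
/- Let Φ : X×Y → ℝ^m be a generating function, τ ∈ ℝ^m, d ∈ ℝ^m with d ≥ 0 componentwise, and p* a probability distribution with p* ∈ U_Φ^{τ−d, τ+d}. Let λ ∈ ℝ^m, γ ∈ ℝ, and let h be a classification rule satisfying Φ(x,y)ᵀλ + γ ≤ −h(x,y) for all (x,y) ∈ X×Y. Then ℓ(h, p*) ≥ 1 + τᵀλ + γ − Σ_{i=1}^m d_i·|λ_i|. -/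
open Finset

/-! Integrating `Φᵀλ + γ ≤ -h` against `p*` bounds the success probability `∑ p* h` by
`-(E_{p*}[Φ]ᵀλ + γ)`, and each moment `E_{p*}[Φ_i]` lies within `d_i` of `τ_i`, so
`E_{p*}[Φ]ᵀλ ≥ τᵀλ - ∑ d_i |λ_i|`. -/

section

variable {α ι : Type*} [Fintype α] [Fintype ι]

theorem sum_mul_linear_add_eq_of_sum_eq_one {p : α → ℝ} (hp : ∑ z, p z = 1) (Φ : α → ι → ℝ)
    (l : ι → ℝ) (γ : ℝ) :
    ∑ z, p z * (∑ i, Φ z i * l i + γ) = ∑ i, (∑ z, p z * Φ z i) * l i + γ := by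
  simp only [mul_add, sum_add_distrib, ← sum_mul, hp, one_mul, mul_sum, ← mul_assoc]
  rw [sum_comm]
  simp only [sum_mul]

theorem mul_sub_mul_abs_le_mul_of_abs_sub_le {s τ d : ℝ} (h : |s - τ| ≤ d) (l : ℝ) :
    τ * l - d * |l| ≤ s * l := by
  have : |s * l - τ * l| ≤ d * |l| := by
    rw [← sub_mul, abs_mul]
    exact mul_le_mul_of_nonneg_right h (abs_nonneg l)
  linarith [neg_abs_le (s * l - τ * l)]

theorem sum_mul_sub_sum_mul_abs_le {s τ d : ι → ℝ} (h : ∀ i, |s i - τ i| ≤ d i)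
    (l : ι → ℝ) :
    ∑ i, τ i * l i - ∑ i, d i * |l i| ≤ ∑ i, s i * l i := by
  rw [← sum_sub_distrib]
  exact sum_le_sum fun i _ => mul_sub_mul_abs_le_mul_of_abs_sub_le (h i) (l i)

end

theorem lpc_risk_lower_bound_general {X Y : Type*} [Fintype X] [Fintype Y] {m : ℕ}
    (Φ : X × Y → Fin m → ℝ) (τ d : Fin m → ℝ)
    (pstar : X × Y → ℝ) (hstar : InU Φ (fun i => τ i - d i) (fun i => τ i + d i) pstar)
    (l : Fin m → ℝ) (γ : ℝ) (h : X × Y → ℝ)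
    (hle : ∀ z : X × Y, ∑ i, Φ z i * l i + γ ≤ -h z) :
    1 + (∑ i, τ i * l i) + γ - (∑ i, d i * |l i|) ≤ loss h pstar := by
  obtain ⟨⟨hp, hsum⟩, hU⟩ := hstar
  have hmoments : ∀ i, |∑ z, pstar z * Φ z i - τ i| ≤ d i := fun i =>
    abs_sub_le_iff.2 ⟨by linarith [(hU i).2], by linarith [(hU i).1]⟩
  have hsuccess : ∑ z, pstar z * (∑ i, Φ z i * l i + γ) ≤ -∑ z, pstar z * h z := by
    rw [← sum_neg_distrib]
    refine sum_le_sum fun z _ => ?_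
    rw [← mul_neg]
    exact mul_le_mul_of_nonneg_left (hle z) (hp z)
  rw [sum_mul_linear_add_eq_of_sum_eq_one hsum] at hsuccess
  have hmean := sum_mul_sub_sum_mul_abs_le hmoments l
  unfold loss
  linarith

/-- lower bound on the risk of a rule `h` with `Φᵀλ + γ ≤ −h` when the true
distribution lies in `U_Φ^{τ−d, τ+d}`. -/
theorem lpc_risk_lower_bound {X Y : Type*} [Fintype X] [Fintype Y]
    [Nonempty X] [Nonempty Y] {m : ℕ}
    (Φ : X × Y → Fin m → ℝ) (τ d : Fin m → ℝ) (hd : ∀ i, 0 ≤ d i)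
    (pstar : X × Y → ℝ) (hstar : InU Φ (fun i => τ i - d i) (fun i => τ i + d i) pstar)
    (l : Fin m → ℝ) (γ : ℝ) (h : X × Y → ℝ) (hrule : IsRule h)
    (hle : ∀ z : X × Y, ∑ i, Φ z i * l i + γ ≤ -h z) :
    1 + (∑ i, τ i * l i) + γ - (∑ i, d i * |l i|) ≤ loss h pstar :=
  lpc_risk_lower_bound_general Φ τ d pstar hstar l γ h hle
end

section
/- Let Φ : X×Y → ℝ^m be a generating function, p* a probability distribution on X×Y with τ∞ = Σ_{(x,y)} p*(x,y)·Φ(x,y), and τ' ∈ ℝ^m. Let (λ*, γ*) be an optimal solution of problem (8) for the vector τ∞, let (λ', γ') be an optimal solution of problem (8) for the vector τ', and let h' be a classification rule satisfying h'(x,y) ≥ Φ(x,y)ᵀλ' + γ' for all (x,y) ∈ X×Y. Then ℓ(h', p*) ≤ (1 − τ∞ᵀλ* − γ*) + (τ' − τ∞)ᵀ(λ' − λ*), and consequently ℓ(h', p*) ≤ (1 − τ∞ᵀλ* − γ*) + ‖τ' − τ∞‖₂·‖λ' − λ*‖₂. -/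
/-!
The rule `h'` dominates the affine function `Φᵀλ' + γ'`, so under `p*` its expected hit rate is at
least `τ∞ᵀλ' + γ'`, i.e. `ℓ(h', p*) ≤ 1 - τ∞ᵀλ' - γ'`. Since `(λ*, γ*)` is feasible, optimality of
`(λ', γ')` for `τ'` gives `τ'ᵀλ* + γ* ≤ τ'ᵀλ' + γ'`; adding the two inequalities and regrouping
yields the first bound, and Cauchy–Schwarz the second.
-/

open Finset

/-- Feasibility for problem (8). -/
def Feas8 {X Y : Type*} [Fintype X] [Fintype Y] [Nonempty X] [Nonempty Y] {m : ℕ}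
    (Φ : X × Y → Fin m → ℝ) (l : Fin m → ℝ) (γ : ℝ) : Prop :=
  (Finset.univ.sup' Finset.univ_nonempty fun x : X =>
    ∑ y : Y, max (∑ i, Φ (x, y) i * l i + γ) 0) ≤ 1

/-- Optimality for problem (8) with expectation point estimate `a`. -/
def Opt8 {X Y : Type*} [Fintype X] [Fintype Y] [Nonempty X] [Nonempty Y] {m : ℕ}
    (Φ : X × Y → Fin m → ℝ) (a : Fin m → ℝ) (l : Fin m → ℝ) (γ : ℝ) : Prop :=
  Feas8 Φ l γ ∧ ∀ l' : Fin m → ℝ, ∀ γ' : ℝ, Feas8 Φ l' γ' →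
    (∑ i, a i * l' i) + γ' ≤ (∑ i, a i * l i) + γ

lemma sum_mul_affine_eq {Z : Type*} [Fintype Z] {m : ℕ} {p : Z → ℝ} (hp : ∑ z, p z = 1)
    (Φ : Z → Fin m → ℝ) (v : Fin m → ℝ) (c : ℝ) :
    ∑ z, p z * (∑ i, Φ z i * v i + c) = ∑ i, (∑ z, p z * Φ z i) * v i + c := by
  simp only [mul_add, mul_sum, sum_add_distrib, ← sum_mul, hp, one_mul]
  rw [sum_comm]
  simp only [sum_mul, mul_assoc]

lemma loss_le_of_affine_le {X Y : Type*} [Fintype X] [Fintype Y] {m : ℕ}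
    {Φ : X × Y → Fin m → ℝ} {p : X × Y → ℝ} (hp : IsProb p)
    {τ : Fin m → ℝ} (hτ : ∀ i, τ i = ∑ z, p z * Φ z i)
    {v : Fin m → ℝ} {c : ℝ} {h : X × Y → ℝ} (hle : ∀ z, ∑ i, Φ z i * v i + c ≤ h z) :
    loss h p ≤ 1 - (∑ i, τ i * v i + c) := by
  have hmean : ∑ i, τ i * v i + c ≤ ∑ z, p z * h z := by
    simp only [hτ, ← sum_mul_affine_eq hp.2]
    exact sum_le_sum fun z _ => mul_le_mul_of_nonneg_left (hle z) (hp.1 z)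
  rw [loss]
  linarith

lemma sum_sub_mul_sub {ι : Type*} (s : Finset ι) (a a' v v' : ι → ℝ) :
    ∑ i ∈ s, (a' i - a i) * (v' i - v i) =
      ∑ i ∈ s, a' i * v' i - ∑ i ∈ s, a' i * v i - ∑ i ∈ s, a i * v' i + ∑ i ∈ s, a i * v i := by
  simp only [sub_mul, mul_sub, sum_sub_distrib]
  ring

theorem lpc_excess_risk_general {X Y : Type*} [Fintype X] [Fintype Y]
    [Nonempty X] [Nonempty Y] {m : ℕ}
    (Φ : X × Y → Fin m → ℝ) (pstar : X × Y → ℝ) (hstar : IsProb pstar)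
    (τ : Fin m → ℝ) (hτ : ∀ i, τ i = ∑ z : X × Y, pstar z * Φ z i)
    (τ' : Fin m → ℝ)
    (l : Fin m → ℝ) (γ : ℝ) (hopt : Opt8 Φ τ l γ)
    (l' : Fin m → ℝ) (γ' : ℝ) (hopt' : Opt8 Φ τ' l' γ')
    (h' : X × Y → ℝ)
    (hge : ∀ z : X × Y, ∑ i, Φ z i * l' i + γ' ≤ h' z) :
    loss h' pstar ≤ (1 - (∑ i, τ i * l i) - γ) + ∑ i, (τ' i - τ i) * (l' i - l i) ∧
      loss h' pstar ≤ (1 - (∑ i, τ i * l i) - γ) +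
        Real.sqrt (∑ i, (τ' i - τ i) ^ 2) * Real.sqrt (∑ i, (l' i - l i) ^ 2) := by
  have hrisk := loss_le_of_affine_le hstar hτ hge
  have hdual : ∑ i, τ' i * l i + γ ≤ ∑ i, τ' i * l' i + γ' := hopt'.2 l γ hopt.1
  have hfirst : loss h' pstar ≤ (1 - (∑ i, τ i * l i) - γ) + ∑ i, (τ' i - τ i) * (l' i - l i) := by
    rw [sum_sub_mul_sub]
    linarith
  refine ⟨hfirst, hfirst.trans ?_⟩
  gcongr
  exact Real.sum_mul_le_sqrt_mul_sqrt _ _ _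

/-- excess-risk bound for the LPC built from the solution of (8) at an
estimate `τ'`, relative to the optimal dual value at the true expectation `τ∞`. -/
theorem lpc_excess_risk {X Y : Type*} [Fintype X] [Fintype Y]
    [Nonempty X] [Nonempty Y] {m : ℕ}
    (Φ : X × Y → Fin m → ℝ) (pstar : X × Y → ℝ) (hstar : IsProb pstar)
    (τ : Fin m → ℝ) (hτ : ∀ i, τ i = ∑ z : X × Y, pstar z * Φ z i)
    (τ' : Fin m → ℝ)
    (l : Fin m → ℝ) (γ : ℝ) (hopt : Opt8 Φ τ l γ)
    (l' : Fin m → ℝ) (γ' : ℝ) (hopt' : Opt8 Φ τ' l' γ')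
    (h' : X × Y → ℝ) (hrule : IsRule h')
    (hge : ∀ z : X × Y, ∑ i, Φ z i * l' i + γ' ≤ h' z) :
    loss h' pstar ≤ (1 - (∑ i, τ i * l i) - γ) + ∑ i, (τ' i - τ i) * (l' i - l i) ∧
      loss h' pstar ≤ (1 - (∑ i, τ i * l i) - γ) +
        Real.sqrt (∑ i, (τ' i - τ i) ^ 2) * Real.sqrt (∑ i, (l' i - l i) ^ 2) :=
  lpc_excess_risk_general Φ pstar hstar τ hτ τ' l γ hopt l' γ' hopt' h' hge
end
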